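/- Let T be a vtree over a finite variable set X and let C be an nTDD of width k respecting T. Then there exists a full TDD C' respecting T, of width at most 2^k, computing the same Boolean function as C. -/

import Mathlib

/-- A vtree: a rooted binary tree whose leaves are labeled by variables. -/
inductive Vtree (V : Type) where
  | leaf : V → Vtree V
  | node : Vtree V → Vtree V → Vtree V

namespace Vtree

variable {V : Type} [DecidableEq V]

/-- The set of variables labeling the leaves of a vtree. -/
def vars : Vtree V → Finset V
  | leaf x => {x}
  | node l r => l.vars ∪ r.vars

/-- A vtree is proper when its leaves carry pairwise distinct variables,
so that the leaves are in one-to-one correspondence with `vars`. -/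
def Proper : Vtree V → Prop
  | leaf _ => True
  | node l r => l.Proper ∧ r.Proper ∧ Disjoint l.vars r.vars

/-- `T.IsNode t` : `t` is (the subtree rooted at) a node of `T`. -/
def IsNode : Vtree V → Vtree V → Prop
  | leaf x, t => t = leaf x
  | node l r, t => t = node l r ∨ l.IsNode t ∨ r.IsNode t

/-- Remove every leaf whose variable is in `Y`, suppressing unary nodes.
Returns `none` if no leaf survives. -/
def restrict (Y : Finset V) : Vtree V → Option (Vtree V)
  | leaf x => if x ∈ Y then none else some (leaf x)
  | node l r =>
    match l.restrict Y, r.restrict Y with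
    | none, o => o
    | some l', none => some l'
    | some l', some r' => some (node l' r')

/-- The vtree `T ∖ x`. -/
def remove (x : V) (T : Vtree V) : Option (Vtree V) := T.restrict {x}

/-- A vtree is linear when every internal node has a leaf child. -/
def Linear : Vtree V → Prop
  | leaf _ => True
  | node l r => ((∃ x, l = leaf x) ∨ (∃ x, r = leaf x)) ∧ l.Linear ∧ r.Linear

/-- The variable order induced by a linear vtree. -/
def order : Vtree V → List V
  | leaf x => [x]
  | node (leaf x) r => x :: r.order
  | node l (leaf x) => x :: l.order
  | node l r => l.order ++ r.order

end Vtree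

/-- Labels of leaf-layer nodes of a TDD: the positive literal, the negative
literal, and the constants 1 and 0. -/
inductive TLab where
  | pos | neg | one | zero
deriving DecidableEq

/-- Disjunction of two leaf labels (used when contracting twin leaf nodes). -/
def TLab.lor : TLab → TLab → TLab
  | .zero, a => a
  | a, .zero => a
  | .one, _ => .one
  | _, .one => .one
  | .pos, .pos => .pos
  | .neg, .neg => .neg
  | .pos, .neg => .one
  | .neg, .pos => .one

/-- A (non-deterministic) tree decision diagram structured along a vtree:
one layer of nodes (identified by natural numbers) per vtree node; leaf-layer
nodes carry labels, internal-layer nodes carry their sets of input pairs. -/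
inductive NTDD (V : Type) where
  | leaf (x : V) (ns : Finset ℕ) (lab : ℕ → TLab)
  | node (l r : NTDD V) (ns : Finset ℕ) (E : ℕ → Finset (ℕ × ℕ))

namespace NTDD

variable {V : Type}

/-- The vtree that an nTDD is structured along. -/
def shape : NTDD V → Vtree V
  | leaf x _ _ => .leaf x
  | node l r _ _ => .node l.shape r.shape

/-- The set of nodes of the top (root) layer. -/
def nodes : NTDD V → Finset ℕ
  | leaf _ ns _ => ns
  | node _ _ ns _ => ns

/-- The size of an nTDD: the total number of input pairs. -/
def size : NTDD V → ℕ
  | leaf _ _ _ => 0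
  | node l r ns E => l.size + r.size + ∑ g ∈ ns, (E g).card

/-- The width of an nTDD: the maximal cardinality of a layer. -/
def width : NTDD V → ℕ
  | leaf _ ns _ => ns.card
  | node l r ns _ => max ns.card (max l.width r.width)

/-- `C.sat g τ` : (the restriction of) the assignment `τ` is a model of the
function `f_g` computed by the top-layer node `g` of `C`. -/
def sat : NTDD V → ℕ → (V → Bool) → Prop
  | leaf x _ lab, g, τ =>
    match lab g with
    | .pos => τ x = true
    | .neg => τ x = false
    | .one => True
    | .zero => False
  | node l r _ E, g, τ => ∃ p ∈ E g, l.sat p.1 τ ∧ r.sat p.2 τ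

/-- Well-formedness: input pairs of top-layer nodes reference nodes of the
children layers. -/
def WF : NTDD V → Prop
  | leaf _ _ _ => True
  | node l r ns E => l.WF ∧ r.WF ∧ ∀ g ∈ ns, ∀ p ∈ E g, p.1 ∈ l.nodes ∧ p.2 ∈ r.nodes

/-- Determinism, turning an nTDD into a TDD: at each leaf layer at most one
node labeled by each of `x`, `¬x`, `1`, and if a node is labeled `1` then all
other nodes are labeled `0`; at each internal layer every pair is the input of
at most one node. -/
def Det : NTDD V → Prop
  | leaf _ ns lab =>
      (∀ g ∈ ns, ∀ g' ∈ ns, lab g = TLab.pos → lab g' = TLab.pos → g = g') ∧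
      (∀ g ∈ ns, ∀ g' ∈ ns, lab g = TLab.neg → lab g' = TLab.neg → g = g') ∧
      (∀ g ∈ ns, ∀ g' ∈ ns, lab g = TLab.one → lab g' = TLab.one → g = g') ∧
      (∀ g ∈ ns, lab g = TLab.one → ∀ g' ∈ ns, g' ≠ g → lab g' = TLab.zero)
  | node l r ns E => l.Det ∧ r.Det ∧ ∀ g ∈ ns, ∀ g' ∈ ns, g ≠ g' → Disjoint (E g) (E g')

/-- `C.Subdiagram D` : `D` is the sub-diagram of `C` sitting at some node of
the underlying vtree (including `C` itself). -/
def Subdiagram : NTDD V → NTDD V → Prop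
  | leaf x ns lab, D => D = leaf x ns lab
  | node l r ns E, D => D = node l r ns E ∨ l.Subdiagram D ∨ r.Subdiagram D

/-- A TDD is full if, at every layer, every assignment is a model of some node
of that layer. -/
def Full (C : NTDD V) : Prop :=
  ∀ D : NTDD V, C.Subdiagram D → ∀ τ : V → Bool, ∃ g ∈ D.nodes, D.sat g τ

end NTDD

/-- A choice of one node id per vtree node, mirroring the vtree: the data of a
certificate. -/
inductive IdTree where
  | leaf (g : ℕ)
  | node (g : ℕ) (l r : IdTree)

/-- The id chosen at the root. -/
def IdTree.root : IdTree → ℕ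
  | .leaf g => g
  | .node g _ _ => g

namespace NTDD

variable {V : Type}

/-- `C.IsCert P τ` : the choice `P` of one node per layer is a certificate for
`τ` in `C` (except for the root condition `P.root = out`, stated separately):
at a leaf labeled `x` the chosen node is labeled `1` or by a literal satisfied
by `τ`, and at an internal node the chosen pair of children nodes is an input
of the chosen node. -/
def IsCert : NTDD V → IdTree → (V → Bool) → Prop
  | leaf x ns lab, IdTree.leaf g, τ =>
      g ∈ ns ∧ (lab g = TLab.one ∨ (lab g = TLab.pos ∧ τ x = true) ∨
        (lab g = TLab.neg ∧ τ x = false))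
  | node l r ns E, IdTree.node g pl pr, τ =>
      g ∈ ns ∧ (pl.root, pr.root) ∈ E g ∧ l.IsCert pl τ ∧ r.IsCert pr τ
  | _, _, _ => False

/-- `SubPair C P D Q` : `D` is the sub-diagram of `C` at some vtree node `t`,
and `Q` is the corresponding part of the certificate data `P` (so `Q.root` is
the node that `P` chooses at `t`). -/
def SubPair : NTDD V → IdTree → NTDD V → IdTree → Prop
  | leaf x ns lab, P, D, Q => D = leaf x ns lab ∧ Q = P
  | node l r ns E, P, D, Q =>
      (D = node l r ns E ∧ Q = P) ∨
      (match P with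
       | IdTree.node _ pl pr => l.SubPair pl D Q ∨ r.SubPair pr D Q
       | _ => False)

/-- Contract the two top-layer nodes `g1, g1'` into the fresh node `v`. -/
def contractLayer (g1 g1' v : ℕ) : NTDD V → NTDD V
  | leaf x ns lab =>
      leaf x (insert v ((ns.erase g1).erase g1'))
        (fun g => if g = v then (lab g1).lor (lab g1') else lab g)
  | node l r ns E =>
      node l r (insert v ((ns.erase g1).erase g1'))
        (fun g => if g = v then E g1 ∪ E g1' else E g)

/-- Twin contraction of nodes `g1, g1'` of the left child layer into `v`:
they are merged in the left layer, and every input pair `(g1, g2)` or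
`(g1', g2)` of a top-layer node is replaced by `(v, g2)`. -/
def contractAtL (g1 g1' v : ℕ) : NTDD V → NTDD V
  | node l r ns E =>
      node (l.contractLayer g1 g1' v) r ns
        (fun g => (E g).image (fun p => if p.1 = g1 ∨ p.1 = g1' then (v, p.2) else p))
  | C => C

/-- Twin contraction of nodes `g1, g1'` of the right child layer into `v`. -/
def contractAtR (g1 g1' v : ℕ) : NTDD V → NTDD V
  | node l r ns E =>
      node l (r.contractLayer g1 g1' v) ns
        (fun g => (E g).image (fun p => if p.2 = g1 ∨ p.2 = g1' then (p.1, v) else p))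
  | C => C

open Classical in
/-- Replace the sub-diagram `D` of `C` by `D'` (in a proper vtree, sub-diagrams
at distinct positions are distinct, so this is unambiguous). -/
noncomputable def replace : NTDD V → NTDD V → NTDD V → NTDD V
  | leaf x ns lab, D, D' => if leaf x ns lab = D then D' else leaf x ns lab
  | node l r ns E, D, D' =>
      if node l r ns E = D then D'
      else node (l.replace D D') (r.replace D D') ns E

/-- `g1` and `g1'` are twins of the left child layer: they have the same
siblings with respect to every top-layer node. -/
def TwinsL (g1 g1' : ℕ) : NTDD V → Prop
  | node l _ ns E => g1 ∈ l.nodes ∧ g1' ∈ l.nodes ∧ g1 ≠ g1' ∧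
      ∀ g ∈ ns, ∀ g2 : ℕ, ((g1, g2) ∈ E g ↔ (g1', g2) ∈ E g)
  | _ => False

/-- `g1` and `g1'` are twins of the right child layer. -/
def TwinsR (g1 g1' : ℕ) : NTDD V → Prop
  | node _ r ns E => g1 ∈ r.nodes ∧ g1' ∈ r.nodes ∧ g1 ≠ g1' ∧
      ∀ g ∈ ns, ∀ g2 : ℕ, ((g2, g1) ∈ E g ↔ (g2, g1') ∈ E g)
  | _ => False

/-- The node set of the left child layer. -/
def leftNodes : NTDD V → Finset ℕ
  | node l _ _ _ => l.nodes
  | _ => ∅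

/-- The node set of the right child layer. -/
def rightNodes : NTDD V → Finset ℕ
  | node _ r _ _ => r.nodes
  | _ => ∅

end NTDD

/-- The number of distinct non-trivial `Y`-subfunctions of the Boolean
function `f` : functions of the form `σ ↦ f (Y.piecewise τ σ)` for some
`τ`, having at least one model. -/
noncomputable def subCount {V : Type} [DecidableEq V] (f : (V → Bool) → Prop) (Y : Finset V) : ℕ :=
  Nat.card {h : (V → Bool) → Prop |
    (∃ τ : V → Bool, h = fun σ => f (Y.piecewise τ σ)) ∧ ∃ σ : V → Bool, h σ}

/-- The number of distinct `Y`-subfunctions of `f` (trivial ones included). -/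
noncomputable def subCountAll {V : Type} [DecidableEq V] (f : (V → Bool) → Prop) (Y : Finset V) : ℕ :=
  Nat.card {h : (V → Bool) → Prop |
    ∃ τ : V → Bool, h = fun σ => f (Y.piecewise τ σ)}

/-!
Subset construction. For a vtree node `t`, the new diagram has one `t`-node for each set `S` of
`t`-nodes of `C`, accepting exactly the assignments whose set of satisfied `t`-nodes is `S`. These
functions partition the assignments, which yields determinism and fullness, and the satisfied set at
`t` is computed from the satisfied sets at the children of `t`. At the root the sets `S` are merged
according to whether `out ∈ S`, so that a single node computes `f_out`.
-/

namespace NTDD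

variable {V : Type}

def litLabel (a b g : ℕ) : TLab :=
  if a = b then (if g = a then .one else .zero)
  else if g = a then .pos else if g = b then .neg else .zero

theorem sat_leaf_litLabel (x : V) (ns : Finset ℕ) (a b g : ℕ) (τ : V → Bool) :
    (leaf x ns (litLabel a b)).sat g τ ↔ g = if τ x then a else b := by
  unfold sat litLabel
  by_cases hab : a = b
  · subst hab; split_ifs <;> simp_all
  · cases hx : τ x <;> by_cases hga : g = a <;> by_cases hgb : g = b <;> simp_all

theorem det_leaf_litLabel (x : V) (ns : Finset ℕ) (a b : ℕ) : (leaf x ns (litLabel a b)).Det := by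
  refine ⟨?_, ?_, ?_, ?_⟩ <;> intros <;> simp only [litLabel] at * <;> split_ifs at * <;> simp_all

theorem Full.leaf {x : V} {ns : Finset ℕ} {lab : ℕ → TLab}
    (h : ∀ τ : V → Bool, ∃ g ∈ ns, (leaf x ns lab).sat g τ) : (leaf x ns lab).Full := by
  rintro D rfl
  exact h

theorem Full.node {l r : NTDD V} {ns : Finset ℕ} {E : ℕ → Finset (ℕ × ℕ)}
    (h : ∀ τ : V → Bool, ∃ g ∈ ns, (node l r ns E).sat g τ) (hl : l.Full) (hr : r.Full) :
    (node l r ns E).Full := by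
  rintro D (rfl | hD | hD)
  exacts [h, hl D hD, hr D hD]

open Classical in
noncomputable def satSet (C : NTDD V) (τ : V → Bool) : Finset ℕ :=
  C.nodes.filter (C.sat · τ)

theorem mem_satSet {C : NTDD V} {τ : V → Bool} {g : ℕ} :
    g ∈ C.satSet τ ↔ g ∈ C.nodes ∧ C.sat g τ := by
  classical
  simp [satSet]

theorem satSet_subset_nodes (C : NTDD V) (τ : V → Bool) : C.satSet τ ⊆ C.nodes :=
  fun _ hg => (mem_satSet.1 hg).1

def posSet (ns : Finset ℕ) (lab : ℕ → TLab) : Finset ℕ :=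
  ns.filter (fun g => lab g = .pos ∨ lab g = .one)

def negSet (ns : Finset ℕ) (lab : ℕ → TLab) : Finset ℕ :=
  ns.filter (fun g => lab g = .neg ∨ lab g = .one)

theorem satSet_leaf (x : V) (ns : Finset ℕ) (lab : ℕ → TLab) (τ : V → Bool) :
    (leaf x ns lab).satSet τ = if τ x then posSet ns lab else negSet ns lab := by
  ext g
  rw [mem_satSet]
  cases hx : τ x <;> cases h : lab g <;> simp [nodes, sat, posSet, negSet, h, hx]

open Classical in
noncomputable def reach (ns : Finset ℕ) (E : ℕ → Finset (ℕ × ℕ)) (S₁ S₂ : Finset ℕ) :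
    Finset ℕ :=
  ns.filter (fun g => ∃ q ∈ E g, q.1 ∈ S₁ ∧ q.2 ∈ S₂)

theorem satSet_node {l r : NTDD V} {ns : Finset ℕ} {E : ℕ → Finset (ℕ × ℕ)}
    (hWF : (node l r ns E).WF) (τ : V → Bool) :
    (node l r ns E).satSet τ = reach ns E (l.satSet τ) (r.satSet τ) := by
  classical
  ext g
  simp only [mem_satSet, reach, Finset.mem_filter]
  refine and_congr_right fun hg => exists_congr fun q => and_congr_right fun hq => ?_
  have hq' := hWF.2.2 g hg q hq
  rw [and_iff_right hq'.1, and_iff_right hq'.2]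

def encS (S : Finset ℕ) : ℕ := Encodable.encode S

noncomputable def decS (n : ℕ) : Finset ℕ := (Encodable.decode n).getD ∅

@[simp]
theorem decS_encS (S : Finset ℕ) : decS (encS S) = S := by
  simp [decS, encS, Encodable.encodek]

/-- The node standing for a set `S` of nodes of `C` is `φ S` in the root layer and `encS S` in
the deeper layers, where it must be decodable. -/
noncomputable def powersetDet (φ : Finset ℕ → ℕ) : NTDD V → NTDD V
  | leaf x ns lab => leaf x (ns.powerset.image φ) (litLabel (φ (posSet ns lab)) (φ (negSet ns lab)))
  | node l r ns E =>
      node (powersetDet encS l) (powersetDet encS r) (ns.powerset.image φ)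
        (fun g => ((powersetDet encS l).nodes ×ˢ (powersetDet encS r).nodes).filter
          (fun p => φ (reach ns E (decS p.1) (decS p.2)) = g))

theorem nodes_powersetDet (φ : Finset ℕ → ℕ) (C : NTDD V) :
    (powersetDet φ C).nodes = C.nodes.powerset.image φ := by
  cases C <;> rfl

theorem mem_nodes_powersetDet (φ : Finset ℕ → ℕ) {C : NTDD V} {S : Finset ℕ}
    (hS : S ⊆ C.nodes) : φ S ∈ (powersetDet φ C).nodes := by
  rw [nodes_powersetDet]
  exact Finset.mem_image_of_mem φ (Finset.mem_powerset.2 hS)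

theorem shape_powersetDet (φ : Finset ℕ → ℕ) (C : NTDD V) :
    (powersetDet φ C).shape = C.shape := by
  induction C generalizing φ with
  | leaf => rfl
  | node l r ns E ihl ihr => simp only [powersetDet, shape, ihl, ihr]

theorem wf_powersetDet (φ : Finset ℕ → ℕ) (C : NTDD V) : (powersetDet φ C).WF := by
  induction C generalizing φ with
  | leaf => trivial
  | node l r ns E ihl ihr =>
    exact ⟨ihl encS, ihr encS, fun g _ p hp => Finset.mem_product.1 (Finset.mem_filter.1 hp).1⟩

theorem det_powersetDet (φ : Finset ℕ → ℕ) (C : NTDD V) : (powersetDet φ C).Det := by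
  induction C generalizing φ with
  | leaf x ns lab => exact det_leaf_litLabel _ _ _ _
  | node l r ns E ihl ihr =>
    refine ⟨ihl encS, ihr encS, fun g _ g' _ hgg' => Finset.disjoint_left.2 fun p hp hp' => ?_⟩
    exact hgg' ((Finset.mem_filter.1 hp).2.symm.trans (Finset.mem_filter.1 hp').2)

theorem sat_powersetDet (φ : Finset ℕ → ℕ) {C : NTDD V} (hWF : C.WF) (g : ℕ) (τ : V → Bool) :
    (powersetDet φ C).sat g τ ↔ g = φ (C.satSet τ) := by
  induction C generalizing φ g with
  | leaf x ns lab =>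
    rw [powersetDet, sat_leaf_litLabel, satSet_leaf]
    split_ifs <;> rfl
  | node l r ns E ihl ihr =>
    simp only [powersetDet, sat, Finset.mem_filter, Finset.mem_product, ihl encS hWF.1,
      ihr encS hWF.2.1, satSet_node hWF]
    constructor
    · rintro ⟨p, ⟨-, rfl⟩, h₁, h₂⟩
      simp [h₁, h₂]
    · rintro rfl
      exact ⟨(encS (l.satSet τ), encS (r.satSet τ)),
        ⟨⟨mem_nodes_powersetDet _ (satSet_subset_nodes _ _),
          mem_nodes_powersetDet _ (satSet_subset_nodes _ _)⟩, by simp⟩, rfl, rfl⟩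

theorem exists_sat_powersetDet (φ : Finset ℕ → ℕ) {C : NTDD V} (hWF : C.WF) (τ : V → Bool) :
    ∃ g ∈ (powersetDet φ C).nodes, (powersetDet φ C).sat g τ :=
  ⟨_, mem_nodes_powersetDet φ (satSet_subset_nodes C τ), (sat_powersetDet φ hWF _ τ).2 rfl⟩

theorem full_powersetDet (φ : Finset ℕ → ℕ) {C : NTDD V} (hWF : C.WF) :
    (powersetDet φ C).Full := by
  induction C generalizing φ with
  | leaf x ns lab => exact Full.leaf (exists_sat_powersetDet φ hWF)
  | node l r ns E ihl ihr =>
    exact Full.node (exists_sat_powersetDet φ hWF) (ihl encS hWF.1) (ihr encS hWF.2.1)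

theorem card_image_powerset_le (φ : Finset ℕ → ℕ) {ns : Finset ℕ} {w : ℕ} (h : ns.card ≤ w) :
    (ns.powerset.image φ).card ≤ 2 ^ w :=
  Finset.card_image_le.trans ((Finset.card_powerset ns).trans_le (Nat.pow_le_pow_right two_pos h))

theorem width_powersetDet (φ : Finset ℕ → ℕ) (C : NTDD V) :
    (powersetDet φ C).width ≤ 2 ^ C.width := by
  induction C generalizing φ with
  | leaf x ns lab => exact card_image_powerset_le φ le_rfl
  | node l r ns E ihl ihr =>
    refine max_le (card_image_powerset_le φ (le_max_left _ _)) (max_le ?_ ?_)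
    · exact (ihl encS).trans
        (Nat.pow_le_pow_right two_pos ((le_max_left _ _).trans (le_max_right _ _)))
    · exact (ihr encS).trans
        (Nat.pow_le_pow_right two_pos ((le_max_right _ _).trans (le_max_right _ _)))

end NTDD

open NTDD in
theorem stmt12_general {V : Type} (T : Vtree V)
    (C : NTDD V) (out : ℕ) (hsh : C.shape = T) (hWF : C.WF)
    (hout : out ∈ C.nodes) (k : ℕ) (hk : C.width = k) :
    ∃ (C' : NTDD V) (out' : ℕ),
      C'.shape = T ∧ C'.WF ∧ C'.Det ∧ C'.Full ∧ out' ∈ C'.nodes ∧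
      C'.width ≤ 2 ^ k ∧
      ∀ τ : V → Bool, (C'.sat out' τ ↔ C.sat out τ) := by
  subst hsh hk
  let φ : Finset ℕ → ℕ := fun S => if out ∈ S then 1 else 0
  have hroot : φ {out} = 1 := by simp [φ]
  refine ⟨powersetDet φ C, 1, shape_powersetDet φ C, wf_powersetDet φ C, det_powersetDet φ C,
    full_powersetDet φ hWF, hroot ▸ mem_nodes_powersetDet φ (Finset.singleton_subset_iff.2 hout),
    width_powersetDet φ C, fun τ => ?_⟩
  have hmem : out ∈ C.satSet τ ↔ C.sat out τ := mem_satSet.trans (and_iff_right hout)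
  rw [sat_powersetDet φ hWF, ← hmem]
  by_cases h : out ∈ C.satSet τ <;> simp [φ, h]

/-- Determinization: for every nTDD `C` of width `k`
respecting a vtree `T` over a finite variable set `X`, there exists a full
TDD `C'` respecting `T`, of width at most `2^k`, computing the same Boolean
function as `C`. -/
theorem stmt12 {V : Type} [DecidableEq V] (X : Finset V) (T : Vtree V)
    (hTp : T.Proper) (hTX : T.vars = X)
    (C : NTDD V) (out : ℕ) (hsh : C.shape = T) (hWF : C.WF)
    (hout : out ∈ C.nodes) (k : ℕ) (hk : C.width = k) :
    ∃ (C' : NTDD V) (out' : ℕ),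
      C'.shape = T ∧ C'.WF ∧ C'.Det ∧ C'.Full ∧ out' ∈ C'.nodes ∧
      C'.width ≤ 2 ^ k ∧
      ∀ τ : V → Bool, (C'.sat out' τ ↔ C.sat out τ) :=
  stmt12_general T C out hsh hWF hout k hk
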